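/- Let a ≤ b be integers, let w be a positive integer, and let x, y be complex numbers such that x is not a nonpositive integer, none of the complex numbers y+k+1 and x−y−k+1 (for a−1 ≤ k ≤ b) is a nonpositive integer, and −y−b+i ≠ 0 for all integers 1 ≤ i ≤ b−a. Then Σ_{k=a}^{b−1} [ (y−x+k)^w · H1(−y−b, b−k−1) − (y+k)^w · H1(−y−b, b−k) ] · (−1)^{wk} · binom(x, y+k)^w = −x^w · (−1)^{wa} · binom(x−1, y+a−1)^w · H1(−y−b, b−a). -/

import Mathlib

open Finset

/-- Generalized binomial coefficient via the complex Gamma function. -/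
noncomputable def cbinom (u v : ℂ) : ℂ :=
  Complex.Gamma (u + 1) / (Complex.Gamma (v + 1) * Complex.Gamma (u - v + 1))

/-- Generalized harmonic number of order 1 with complex offset `c`:
`H1 c n = ∑_{i=1}^{n} 1/(c+i)` (zero if `n ≤ 0`). -/
noncomputable def H1 (c : ℂ) (n : ℤ) : ℂ :=
  ∑ i ∈ Finset.range n.toNat, 1 / (c + (i : ℂ) + 1)

/-!
The summand of index `k` is `F (k + 1) - F k` for
`F k = x ^ w (-1) ^ (w k) binom(x - 1, y + k - 1) ^ w H1(-y - b, b - k)`, by the two absorption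
identities `x binom(x - 1, v) = (x - v) binom(x, v)` and `x binom(x - 1, v - 1) = v binom(x, v)`.
The sum telescopes to `F b - F a`, and `F b = 0` because `H1 c 0 = 0`.
-/

theorem sum_Ico_int_sub {M : Type*} [AddCommGroup M] (f : ℤ → M) {a b : ℤ} (hab : a ≤ b) :
    ∑ k ∈ Ico a b, (f (k + 1) - f k) = f b - f a := by
  induction b, hab using Int.leInduction with
  | base => simp
  | succ b hab ih =>
    rw [← Order.succ_eq_add_one, ← insert_Ico_right_eq_Ico_succ hab,
      sum_insert right_notMem_Ico, ih, Order.succ_eq_add_one]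
    abel

theorem cbinom_sub (u v : ℂ) : cbinom u (u - v) = cbinom u v := by
  unfold cbinom
  rw [sub_sub_cancel, mul_comm]

theorem mul_cbinom_sub_one {x : ℂ} (hx : x ≠ 0) (v : ℂ) :
    x * cbinom (x - 1) v = (x - v) * cbinom x v := by
  unfold cbinom
  rw [sub_add_cancel, show x - 1 - v + 1 = x - v by ring, Complex.Gamma_add_one x hx]
  rcases eq_or_ne (x - v) 0 with hxv | hxv
  · -- both sides vanish, by the junk value `Γ 0 = 0`
    simp [hxv]
  · rw [Complex.Gamma_add_one _ hxv]
    field_simp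

theorem mul_cbinom_sub_one_sub_one {x : ℂ} (hx : x ≠ 0) (v : ℂ) :
    x * cbinom (x - 1) (v - 1) = v * cbinom x v := by
  rw [← cbinom_sub, show x - 1 - (v - 1) = x - v by ring, mul_cbinom_sub_one hx,
    sub_sub_cancel, cbinom_sub]

theorem H1_zero (c : ℂ) : H1 c 0 = 0 := by
  simp [H1]

theorem harmonic_identity_2b_general (a b : ℤ) (hab : a ≤ b) (w : ℕ) (x y : ℂ)
    (hx : ∀ m : ℕ, x ≠ -(m : ℂ)) :
    ∑ k ∈ Finset.Ico a b,
        (((y - x + (k : ℂ)) ^ w * H1 (-y - (b : ℂ)) (b - k - 1) -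
          (y + (k : ℂ)) ^ w * H1 (-y - (b : ℂ)) (b - k)) *
          ((-1 : ℂ) ^ ((w : ℤ) * k) * cbinom x (y + (k : ℂ)) ^ w)) =
    -(x ^ w * (-1 : ℂ) ^ ((w : ℤ) * a) * cbinom (x - 1) (y + (a : ℂ) - 1) ^ w *
      H1 (-y - (b : ℂ)) (b - a)) := by
  have hx0 : x ≠ 0 := by simpa using hx 0
  set F : ℤ → ℂ := fun k =>
    x ^ w * (-1 : ℂ) ^ ((w : ℤ) * k) * cbinom (x - 1) (y + (k : ℂ) - 1) ^ w *
      H1 (-y - b) (b - k)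
  have hstep : ∀ k : ℤ, F (k + 1) = (-1 : ℂ) ^ ((w : ℤ) * k) * (y - x + k) ^ w *
      cbinom x (y + k) ^ w * H1 (-y - b) (b - k - 1) := by
    intro k
    have hsign : (-1 : ℂ) ^ ((w : ℤ) * (k + 1)) = (-1 : ℂ) ^ ((w : ℤ) * k) * (-1) ^ w := by
      rw [mul_add, mul_one, zpow_add₀ (by norm_num), zpow_natCast]
    have habsorb :
        x ^ w * cbinom (x - 1) (y + k) ^ w = (x - (y + k)) ^ w * cbinom x (y + k) ^ w := by
      rw [← mul_pow, mul_cbinom_sub_one hx0, mul_pow]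
    simp only [F, hsign, Int.cast_add, Int.cast_one, ← add_assoc, add_sub_cancel_right,
      show b - (k + 1) = b - k - 1 by ring]
    rw [show y - x + k = -1 * (x - (y + k)) by ring, mul_pow]
    linear_combination (-1 : ℂ) ^ ((w : ℤ) * k) * (-1) ^ w * H1 (-y - b) (b - k - 1) * habsorb
  have hF : ∀ k : ℤ, F k = (-1 : ℂ) ^ ((w : ℤ) * k) * (y + k) ^ w *
      cbinom x (y + k) ^ w * H1 (-y - b) (b - k) := by
    intro k
    have habsorb :
        x ^ w * cbinom (x - 1) (y + k - 1) ^ w = (y + k) ^ w * cbinom x (y + k) ^ w := by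
      rw [← mul_pow, mul_cbinom_sub_one_sub_one hx0, mul_pow]
    linear_combination (-1 : ℂ) ^ ((w : ℤ) * k) * H1 (-y - b) (b - k) * habsorb
  calc _ = ∑ k ∈ Ico a b, (F (k + 1) - F k) := sum_congr rfl fun k _ => by rw [hstep, hF]; ring
    _ = F b - F a := sum_Ico_int_sub F hab
    _ = _ := by simp [F, H1_zero]

theorem harmonic_identity_2b (a b : ℤ) (hab : a ≤ b) (w : ℕ) (hw : 0 < w) (x y : ℂ)
    (hx : ∀ m : ℕ, x ≠ -(m : ℂ))
    (h1 : ∀ k : ℤ, a - 1 ≤ k → k ≤ b → ∀ m : ℕ, y + (k : ℂ) + 1 ≠ -(m : ℂ))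
    (h2 : ∀ k : ℤ, a - 1 ≤ k → k ≤ b → ∀ m : ℕ, x - y - (k : ℂ) + 1 ≠ -(m : ℂ))
    (hh : ∀ i : ℤ, 1 ≤ i → i ≤ b - a → -y - (b : ℂ) + (i : ℂ) ≠ 0) :
    ∑ k ∈ Finset.Ico a b,
        (((y - x + (k : ℂ)) ^ w * H1 (-y - (b : ℂ)) (b - k - 1) -
          (y + (k : ℂ)) ^ w * H1 (-y - (b : ℂ)) (b - k)) *
          ((-1 : ℂ) ^ ((w : ℤ) * k) * cbinom x (y + (k : ℂ)) ^ w)) =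
    -(x ^ w * (-1 : ℂ) ^ ((w : ℤ) * a) * cbinom (x - 1) (y + (a : ℂ) - 1) ^ w *
      H1 (-y - (b : ℂ)) (b - a)) :=
  harmonic_identity_2b_general a b hab w x y hx
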